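/- arXiv:2205.12940 — 4 statements merged into one kernel-verified Lean document; each statement's English description precedes it below -/
import Mathlib

section
/- Let Z_1,...,Z_{N+1} be exchangeable real-valued random variables with no ties almost surely, and let α ∈ (0,1). Define w as the ⌈(1-α)(N+1)⌉-th smallest value among {Z_1,...,Z_N} ∪ {+∞}. Then P(Z_{N+1} ≤ w) ≥ 1 - α. -/
open MeasureTheory
open scoped ENNReal

/-- Exchangeability of a finite family of random elements. -/
def Exchangeable {Ω α : Type*} [MeasurableSpace Ω] [MeasurableSpace α] {n : ℕ}
    (P : Measure Ω) (Z : Fin n → Ω → α) : Prop :=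
  ∀ π : Equiv.Perm (Fin n),
    Measure.map (fun ω => fun i => Z (π i) ω) P = Measure.map (fun ω => fun i => Z i ω) P

/-- The `k`-th smallest element of a multiset in a linear order (`k` counted from 1),
returning `default` when `k` exceeds the size. -/
noncomputable def kthSmallest {α : Type*} [LinearOrder α] (s : Multiset α) (k : ℕ)
    (default : α) : α :=
  (s.sort (· ≤ ·)).getD (k - 1) default

lemma le_kthSmallest {β : Type*} [LinearOrder β] (s : Multiset β) (k : ℕ) (d : β)
    (hk1 : 1 ≤ k) (hk2 : k ≤ Multiset.card s) (x : β)
    (h : Multiset.countP (fun a => a < x) s < k) : x ≤ kthSmallest s k d := by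
  by_contra hx
  push_neg at hx
  set l := s.sort (· ≤ ·) with hl
  have hlen : l.length = Multiset.card s := s.length_sort _
  have hkl : k - 1 < l.length := by omega
  have hget : kthSmallest s k d = l.get ⟨k-1, hkl⟩ := by
    simp [kthSmallest, ← hl]
    rw [← List.getD_eq_getElem?_getD]
    exact List.getD_eq_getElem l d hkl
  have hsorted : List.Pairwise (· ≤ ·) l := Multiset.pairwise_sort (s := s) (r := (· ≤ ·))
  have hcount : Multiset.countP (fun a => a < x) s = l.countP (fun a => decide (a < x)) := by
    rw [← Multiset.sort_eq (s := s) (r := (· ≤ ·)), ← hl]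
    simp [Multiset.coe_countP]
  have htake : ∀ a ∈ l.take k, a < x := by
    intro a ha
    obtain ⟨i, hi, hia⟩ := List.mem_take_iff_getElem.mp ha
    have hik : i < k := lt_of_lt_of_le hi (le_min_iff.mp le_rfl).1
    have hile : i ≤ k - 1 := by omega
    have : l.get ⟨i, by omega⟩ ≤ l.get ⟨k-1, hkl⟩ :=
      hsorted.rel_get_of_le (by simpa using hile)
    rw [hget] at hx
    calc a = l[i] := hia.symm
    _ ≤ l.get ⟨k-1,hkl⟩ := this
    _ < x := hx
  have : k ≤ l.countP (fun a => decide (a < x)) := by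
    have h1 : (l.take k).countP (fun a => decide (a < x)) = k := by
      rw [List.countP_eq_length.mpr (by intro a ha; simpa using htake a ha)]
      simp [List.length_take]; omega
    calc k = (l.take k).countP (fun a => decide (a < x)) := h1.symm
    _ ≤ l.countP _ := by
        conv_rhs => rw [← List.take_append_drop k l]
        rw [List.countP_append]; omega
  omega

lemma card_rank_le {n k : ℕ} (v : Fin n → ℝ) (hv : Function.Injective v) (hk : k ≤ n) :
    (Finset.univ.filter fun i =>
      (Finset.univ.filter fun j => v j ≤ v i).card ≤ k).card = k := by
  set c : Fin n → ℕ := fun i => (Finset.univ.filter fun j => v j ≤ v i).card with hc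
  have hmono : ∀ i j, v i < v j → c i < c j := by
    intro i j hij
    apply Finset.card_lt_card
    constructor
    · intro a ha
      simp only [Finset.mem_filter, Finset.mem_univ, true_and] at ha ⊢
      exact ha.trans hij.le
    · intro hsub
      have hj : j ∈ Finset.univ.filter fun j' => v j' ≤ v j := by simp
      have := hsub hj
      simp only [Finset.mem_filter, Finset.mem_univ, true_and] at this
      exact absurd this (not_le.mpr hij)
  have hinj : Function.Injective c := by
    intro i j hcij
    by_contra hne
    rcases lt_trichotomy (v i) (v j) with h | h | h
    · exact absurd hcij (hmono i j h).ne
    · exact hne (hv h)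
    · exact absurd hcij.symm (hmono j i h).ne
  have h1 : ∀ i, 1 ≤ c i := by
    intro i
    have : i ∈ Finset.univ.filter fun j => v j ≤ v i := by simp
    exact Finset.card_pos.mpr ⟨i, this⟩
  have h2 : ∀ i, c i ≤ n := by
    intro i
    calc c i ≤ Finset.univ.card := Finset.card_filter_le _ _
    _ = n := by simp
  have himg : Finset.image c Finset.univ = Finset.Icc 1 n := by
    apply Finset.eq_of_subset_of_card_le
    · intro m hm
      simp only [Finset.mem_image, Finset.mem_univ, true_and] at hm
      obtain ⟨i, rfl⟩ := hm
      exact Finset.mem_Icc.mpr ⟨h1 i, h2 i⟩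
    · rw [Nat.card_Icc, Finset.card_image_of_injective _ hinj]
      simp
  calc (Finset.univ.filter fun i => c i ≤ k).card
      = ((Finset.univ.filter fun i => c i ≤ k).image c).card :=
        (Finset.card_image_of_injective _ hinj).symm
    _ = ((Finset.univ.image c).filter (fun m => m ≤ k)).card := by
        rw [Finset.filter_image]
    _ = (Finset.Icc 1 k).card := by
        rw [himg]
        congr 1
        ext m
        simp only [Finset.mem_filter, Finset.mem_Icc]
        omega
    _ = k := by rw [Nat.card_Icc]; omega

/-- Split conformal coverage: with `w` the `⌈(1-α)(N+1)⌉`-th smallest value of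
`{Z 1, …, Z N} ∪ {+∞}`, the test point `Z (N+1)` satisfies `P(Z (N+1) ≤ w) ≥ 1 - α`. -/
theorem split_conformal_coverage {Ω : Type*} [MeasurableSpace Ω] (P : Measure Ω)
    [IsProbabilityMeasure P] (N : ℕ) (hN : 0 < N) (Z : Fin (N + 1) → Ω → ℝ)
    (hmeas : ∀ i, Measurable (Z i))
    (hexch : Exchangeable P Z)
    (hties : ∀ i j, i ≠ j → P {ω | Z i ω = Z j ω} = 0)
    (α : ℝ) (hα : α ∈ Set.Ioo (0 : ℝ) 1) :
    P {ω | (Z (Fin.last N) ω : EReal) ≤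
        kthSmallest
          ((Finset.univ.val.map (fun i : Fin N => (Z i.castSucc ω : EReal))) + {(⊤ : EReal)})
          (⌈(1 - α) * (N + 1)⌉.toNat) ⊤}
      ≥ ENNReal.ofReal (1 - α) := by
  obtain ⟨hα0, hα1⟩ := hα
  set k : ℕ := ⌈(1 - α) * (N + 1)⌉.toNat with hkdef
  have hxpos : (0:ℝ) < (1 - α) * ((N:ℝ) + 1) :=
    mul_pos (by linarith) (by positivity)
  have hceil1 : (1:ℤ) ≤ ⌈(1 - α) * ((N:ℝ) + 1)⌉ := Int.ceil_pos.mpr hxpos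
  have hk1 : 1 ≤ k := by omega
  have hceilN : ⌈(1 - α) * ((N:ℝ) + 1)⌉ ≤ (N + 1 : ℤ) := by
    apply Int.ceil_le.mpr
    push_cast
    have hN0 : (0:ℝ) ≤ (N:ℝ) := Nat.cast_nonneg N
    nlinarith
  have hk2 : k ≤ N + 1 := by omega
  have hzk : ((k:ℤ)) = ⌈(1 - α) * ((N:ℝ) + 1)⌉ := by omega
  have hkx : ((1 - α) * ((N:ℝ) + 1)) ≤ (k:ℝ) := by
    have h1 := Int.le_ceil ((1 - α) * ((N:ℝ) + 1))
    rw [← hzk] at h1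
    exact_mod_cast h1
  -- rank function
  set C : Fin (N+1) → Ω → ℕ :=
    fun i ω => (Finset.univ.filter fun j => Z j ω ≤ Z i ω).card with hC
  have hCsum : ∀ i ω, C i ω = ∑ j, if Z j ω ≤ Z i ω then 1 else 0 := by
    intro i ω; rw [hC]; exact Finset.card_filter _ _
  have hCmeas : ∀ i, Measurable (C i) := by
    intro i
    have : C i = fun ω => ∑ j, if Z j ω ≤ Z i ω then 1 else 0 := by
      funext ω; exact hCsum i ω
    rw [this]
    exact Finset.measurable_sum _ fun j _ =>
      Measurable.ite (measurableSet_le (hmeas j) (hmeas i)) measurable_const measurable_const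
  set A : Fin (N+1) → Set Ω := fun i => {ω | C i ω ≤ k} with hA
  have hAmeas : ∀ i, MeasurableSet (A i) := by
    intro i
    exact (hCmeas i) (measurableSet_Iic (a := k))
  -- no-ties set
  set T : Set Ω := {ω | ∀ i j, i ≠ j → Z i ω ≠ Z j ω} with hT
  have hTnull : P Tᶜ = 0 := by
    have hsub : Tᶜ ⊆ ⋃ (i) (j) (_ : i ≠ j), {ω | Z i ω = Z j ω} := by
      intro ω hω
      simp only [hT, Set.mem_compl_iff, Set.mem_setOf_eq, not_forall] at hω
      obtain ⟨i, j, hij, hz⟩ := hω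
      simp only [Set.mem_iUnion]
      exact ⟨i, j, hij, not_not.mp hz⟩
    exact measure_mono_null hsub (measure_iUnion_null fun i => measure_iUnion_null fun j =>
      measure_iUnion_null fun h => hties i j h)
  -- exchangeability : all A i have same measure
  have hZvec : Measurable (fun ω => fun i => Z i ω) := measurable_pi_lambda _ hmeas
  set g : (Fin (N+1) → ℝ) → ℕ :=
    fun v => (Finset.univ.filter fun j => v j ≤ v (Fin.last N)).card with hg
  have hgmeas : Measurable g := by
    have : g = fun v => ∑ j, if v j ≤ v (Fin.last N) then 1 else 0 := by
      funext v; rw [hg]; exact Finset.card_filter _ _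
    rw [this]
    exact Finset.measurable_sum _ fun j _ =>
      Measurable.ite (measurableSet_le (measurable_pi_apply j) (measurable_pi_apply _))
        measurable_const measurable_const
  have hS : MeasurableSet (g ⁻¹' Set.Iic k) := hgmeas measurableSet_Iic
  have hPA : ∀ i, P (A i) = P (A (Fin.last N)) := by
    intro i
    set σ : Equiv.Perm (Fin (N+1)) := Equiv.swap i (Fin.last N) with hσ
    have hmeasσ : Measurable (fun ω => fun j => Z (σ j) ω) :=
      measurable_pi_lambda _ fun j => hmeas (σ j)
    have hσlast : σ (Fin.last N) = i := Equiv.swap_apply_right _ _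
    have h1 : A (Fin.last N) = (fun ω => fun i => Z i ω) ⁻¹' (g ⁻¹' Set.Iic k) := rfl
    have h2 : A i = (fun ω => fun j => Z (σ j) ω) ⁻¹' (g ⁻¹' Set.Iic k) := by
      ext ω
      have hcard : (Finset.univ.filter fun j => Z (σ j) ω ≤ Z i ω).card
          = (Finset.univ.filter fun j => Z j ω ≤ Z i ω).card := by
        apply Finset.card_bij (fun j _ => σ j)
        · intro a ha
          simp only [Finset.mem_filter, Finset.mem_univ, true_and] at ha ⊢
          exact ha
        · intro a _ b _ hab
          exact σ.injective hab
        · intro b hb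
          refine ⟨σ.symm b, ?_, by simp⟩
          simp only [Finset.mem_filter, Finset.mem_univ, true_and,
            Equiv.apply_symm_apply] at hb ⊢
          exact hb
      simp only [hA, hC, Set.mem_setOf_eq, Set.mem_preimage, Set.mem_Iic, hg, hσlast]
      rw [hcard]
    rw [h1, h2, ← Measure.map_apply hmeasσ hS, ← Measure.map_apply hZvec hS, hexch σ]
  -- sum of measures
  have hsum : ∑ i : Fin (N+1), P (A i) = (k : ℝ≥0∞) := by
    calc ∑ i : Fin (N+1), P (A i)
        = ∑ i : Fin (N+1), ∫⁻ ω, (A i).indicator (fun _ => (1:ℝ≥0∞)) ω ∂P :=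
          Finset.sum_congr rfl fun i _ => (lintegral_indicator_one (hAmeas i)).symm
      _ = ∫⁻ ω, ∑ i : Fin (N+1), (A i).indicator (fun _ => (1:ℝ≥0∞)) ω ∂P :=
          (lintegral_finset_sum _ fun i _ =>
            (measurable_const.indicator (hAmeas i))).symm
      _ = ∫⁻ _, (k : ℝ≥0∞) ∂P := by
          apply lintegral_congr_ae
          have hTae : ∀ᵐ ω ∂P, ω ∈ T := by
            rw [ae_iff]
            exact hTnull
          filter_upwards [hTae] with ω hω
          have hvinj : Function.Injective (fun i => Z i ω) := by
            intro i j hij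
            by_contra hne
            exact hω i j hne hij
          have hcard := card_rank_le (fun i => Z i ω) hvinj hk2
          calc ∑ i : Fin (N+1), (A i).indicator (fun _ => (1:ℝ≥0∞)) ω
              = ∑ i : Fin (N+1), if C i ω ≤ k then (1:ℝ≥0∞) else 0 := by
                apply Finset.sum_congr rfl
                intro i _
                simp [Set.indicator_apply, hA, Set.mem_setOf_eq]
            _ = ((Finset.univ.filter fun i => C i ω ≤ k).card : ℝ≥0∞) :=
                Finset.sum_boole _ _
            _ = (k : ℝ≥0∞) := by exact_mod_cast hcard
      _ = (k : ℝ≥0∞) := by simp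
  have hne0 : ((N:ℝ≥0∞) + 1) ≠ 0 := by simp
  have hnetop : ((N:ℝ≥0∞) + 1) ≠ ⊤ := by
    simp [ENNReal.add_eq_top, ENNReal.natCast_ne_top]
  have hPlast : P (A (Fin.last N)) = (k : ℝ≥0∞) / ((N:ℝ≥0∞) + 1) := by
    have hNP : ∑ i : Fin (N+1), P (A i) = ((N:ℝ≥0∞) + 1) * P (A (Fin.last N)) := by
      rw [Finset.sum_congr rfl fun i _ => hPA i, Finset.sum_const, Finset.card_univ,
        Fintype.card_fin, nsmul_eq_mul]
      push_cast
      ring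
    rw [hNP] at hsum
    rw [ENNReal.eq_div_iff hne0 hnetop]
    exact hsum
  -- deterministic inclusion
  set E : Set Ω := {ω | (Z (Fin.last N) ω : EReal) ≤
        kthSmallest
          ((Finset.univ.val.map (fun i : Fin N => (Z i.castSucc ω : EReal))) + {(⊤ : EReal)})
          k ⊤} with hE
  have hsub : A (Fin.last N) ∩ T ⊆ E := by
    rintro ω ⟨hωA, hωT⟩
    have hωT' : ∀ i j : Fin (N+1), i ≠ j → Z i ω ≠ Z j ω := hωT
    have hA' : C (Fin.last N) ω ≤ k := hωA
    simp only [hE, Set.mem_setOf_eq]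
    set s : Multiset EReal :=
      (Finset.univ.val.map (fun i : Fin N => (Z i.castSucc ω : EReal))) + {(⊤ : EReal)} with hs
    apply le_kthSmallest s k ⊤ hk1
    · rw [hs]
      simp only [Multiset.card_add, Multiset.card_map, Multiset.card_singleton]
      have huniv : Multiset.card (Finset.univ.val : Multiset (Fin N)) = N := Finset.card_fin N
      omega
    · -- countP < k
      have hCT : C (Fin.last N) ω =
          (Finset.univ.filter fun i : Fin N => Z i.castSucc ω < Z (Fin.last N) ω).card + 1 := by
        rw [hCsum, Fin.sum_univ_castSucc]
        have heq : ∀ i : Fin N,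
            (if Z i.castSucc ω ≤ Z (Fin.last N) ω then (1:ℕ) else 0)
            = (if Z i.castSucc ω < Z (Fin.last N) ω then (1:ℕ) else 0) := by
          intro i
          have hne : Z i.castSucc ω ≠ Z (Fin.last N) ω :=
            hωT' _ _ (Fin.castSucc_lt_last i).ne
          rcases lt_or_gt_of_ne hne with h | h
          · simp [h.le, h]
          · simp [not_le.mpr h, not_lt.mpr h.le]
        rw [Finset.sum_congr rfl fun i _ => heq i]
        rw [Finset.card_filter]
        simp
      have hfeq : (Finset.univ.filter fun i : Fin N =>
            ((Z i.castSucc ω : ℝ) : EReal) < ((Z (Fin.last N) ω : ℝ) : EReal))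
          = (Finset.univ.filter fun i : Fin N => Z i.castSucc ω < Z (Fin.last N) ω) := by
        apply Finset.filter_congr
        intro i _
        exact EReal.coe_lt_coe_iff
      have hcount : Multiset.countP (fun a => a < ((Z (Fin.last N) ω : ℝ) : EReal)) s
          = (Finset.univ.filter fun i : Fin N => Z i.castSucc ω < Z (Fin.last N) ω).card := by
        rw [hs, Multiset.countP_add, Multiset.countP_map]
        have h1 : Multiset.countP (fun a => a < ((Z (Fin.last N) ω : ℝ) : EReal))
            ({(⊤ : EReal)} : Multiset EReal) = 0 := by
          rw [show ({(⊤ : EReal)} : Multiset EReal) = (⊤ : EReal) ::ₘ 0 from rfl,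
            Multiset.countP_cons]
          simp
        rw [h1, add_zero, ← hfeq]
        rfl
      rw [hcount]
      omega
  have hPE : P (A (Fin.last N)) ≤ P E := by
    calc P (A (Fin.last N)) ≤ P ((A (Fin.last N) ∩ T) ∪ Tᶜ) := by
          apply measure_mono
          intro ω hω
          by_cases hωT : ω ∈ T
          · exact Or.inl ⟨hω, hωT⟩
          · exact Or.inr hωT
      _ ≤ P (A (Fin.last N) ∩ T) + P Tᶜ := measure_union_le _ _
      _ = P (A (Fin.last N) ∩ T) := by rw [hTnull, add_zero]
      _ ≤ P E := measure_mono hsub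
  -- conclude
  have hfinal : ENNReal.ofReal (1 - α) ≤ (k : ℝ≥0∞) / ((N:ℝ≥0∞) + 1) := by
    have hdiv : (1 - α) ≤ (k:ℝ) / ((N:ℝ) + 1) := by
      rw [le_div_iff₀ (by positivity)]
      linarith [hkx]
    calc ENNReal.ofReal (1 - α) ≤ ENNReal.ofReal ((k:ℝ) / ((N:ℝ) + 1)) :=
          ENNReal.ofReal_le_ofReal hdiv
      _ = (k : ℝ≥0∞) / ((N:ℝ≥0∞) + 1) := by
          rw [ENNReal.ofReal_div_of_pos (by positivity)]
          congr 1
          · exact ENNReal.ofReal_natCast k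
          · rw [ENNReal.ofReal_add (by positivity) zero_le_one]
            simp [ENNReal.ofReal_natCast]
  calc ENNReal.ofReal (1 - α) ≤ (k : ℝ≥0∞) / ((N:ℝ≥0∞) + 1) := hfinal
    _ = P (A (Fin.last N)) := hPlast.symm
    _ ≤ P E := hPE
end

section
/- Let f : Z × W → R be measurable and g : Z^{N+1} → W a measurable permutation-invariant function (g(s_{π(1)},...,s_{π(N+1)}) = g(s_1,...,s_{N+1}) for all permutations π). If S_1,...,S_{N+1} are exchangeable, then the scores V_i = f(S_i, g(S_1,...,S_{N+1})), i = 1,...,N+1, form an exchangeable sequence of random variables. -/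
open MeasureTheory

/-- Scores `V i = f (S i, g (S 1, …, S (N+1)))` with `g` permutation-invariant
form an exchangeable sequence whenever the `S i` are exchangeable. -/
theorem scores_with_invariant_summary_exchangeable {Ω 𝒵 𝒲 : Type*} [MeasurableSpace Ω]
    [MeasurableSpace 𝒵] [MeasurableSpace 𝒲] (P : Measure Ω) [IsProbabilityMeasure P]
    (N : ℕ) (S : Fin (N + 1) → Ω → 𝒵) (hSmeas : ∀ i, Measurable (S i))
    (f : 𝒵 × 𝒲 → ℝ) (hf : Measurable f)
    (g : (Fin (N + 1) → 𝒵) → 𝒲) (hg : Measurable g)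
    (hginv : ∀ (π : Equiv.Perm (Fin (N + 1))) (s : Fin (N + 1) → 𝒵),
      g (fun i => s (π i)) = g s)
    (hexch : Exchangeable P S) :
    Exchangeable P (fun i ω => f (S i ω, g (fun j => S j ω))) := by
  intro π
  set F : (Fin (N + 1) → 𝒵) → (Fin (N + 1) → ℝ) := fun s i => f (s i, g s) with hFdef
  have hF : Measurable F :=
    measurable_pi_lambda _ fun i => hf.comp ((measurable_pi_apply i).prodMk hg)
  have hS : Measurable (fun ω => fun i => S i ω) := measurable_pi_lambda _ hSmeas
  have hSπ : Measurable (fun ω => fun i => S (π i) ω) :=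
    measurable_pi_lambda _ fun i => hSmeas _
  have h1 : (fun ω => fun i => f (S (π i) ω, g (fun j => S j ω)))
      = F ∘ (fun ω => fun i => S (π i) ω) := by
    funext ω
    simp only [hFdef, Function.comp]
    rw [hginv π (fun j => S j ω)]
  have h2 : (fun ω => fun i => f (S i ω, g (fun j => S j ω)))
      = F ∘ (fun ω => fun i => S i ω) := rfl
  show Measure.map (fun ω => fun i => f (S (π i) ω, g (fun j => S j ω))) P = _
  rw [h1, h2, ← Measure.map_map hF hSπ, ← Measure.map_map hF hS, hexch π]
end

section
/- Let V_1,...,V_{N+1} be exchangeable real random variables with no ties a.s., α ∈ (0,1), and let q = Q(⌈(1-α)(N+1)⌉/(N+1), {V_1,...,V_{N+1}}) denote the ⌈(1-α)(N+1)⌉-th order statistic of V_1,...,V_{N+1}. Then P(V_{N+1} ≤ q) ≥ 1 - α. -/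
open MeasureTheory

open List in
theorem sorted_getD_le_iff {l : List ℝ} (hl : l.Pairwise (· ≤ ·)) {k : ℕ}
    (hk1 : 1 ≤ k) (hk2 : k ≤ l.length) (t : ℝ) :
    l.getD (k - 1) 0 ≤ t ↔ k ≤ l.countP (fun x => decide (x ≤ t)) := by
  have hlt : k - 1 < l.length := by omega
  rw [List.getD_eq_getElem l 0 hlt]
  constructor
  · intro h
    have h1 : l = l.take k ++ l.drop k := (List.take_append_drop k l).symm
    have h2 : (l.take k).countP (fun x => decide (x ≤ t)) = (l.take k).length := by
      rw [List.countP_eq_length]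
      intro a ha
      simp only [decide_eq_true_eq]
      obtain ⟨i, hi, rfl⟩ := List.getElem_of_mem ha
      rw [List.length_take] at hi
      rw [List.getElem_take]
      exact le_trans (hl.rel_get_of_le (by simp; omega : (⟨i, by omega⟩ : Fin l.length) ≤ ⟨k-1, hlt⟩)) h
    calc k = (l.take k).length := by rw [List.length_take]; omega
    _ = (l.take k).countP _ := h2.symm
    _ ≤ l.countP (fun x => decide (x ≤ t)) := by
        conv_rhs => rw [h1]
        rw [List.countP_append]; omega
  · intro h
    have hfilter : l.countP (fun x => decide (x ≤ t)) = (l.takeWhile (fun x => decide (x ≤ t))).length := by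
      rw [← List.takeWhile_append_dropWhile (p := fun x => decide (x ≤ t)) (l := l),
        List.countP_append]
      have h1 : (l.takeWhile (fun x => decide (x ≤ t))).countP (fun x => decide (x ≤ t)) =
          (l.takeWhile (fun x => decide (x ≤ t))).length :=
        List.countP_eq_length.2 fun a ha => List.mem_takeWhile_imp (p := fun x => decide (x ≤ t)) ha
      have h2 : (l.dropWhile (fun x => decide (x ≤ t))).countP (fun x => decide (x ≤ t)) = 0 := by
        rw [List.countP_eq_zero]
        intro a ha
        cases hd : l.dropWhile (fun x => decide (x ≤ t)) with
        | nil => simp [hd] at ha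
        | cons b bs =>
          have hb : ¬ (b ≤ t) := by
            have := List.head_dropWhile_not (p := fun x => decide (x ≤ t)) (l := l) (by simp [hd])
            simp [hd] at this; exact not_le.2 this
          have hsorted : (l.dropWhile (fun x => decide (x ≤ t))).Pairwise (· ≤ ·) :=
            hl.sublist (List.dropWhile_sublist _)
          rw [hd] at ha hsorted
          rcases List.mem_cons.1 ha with rfl | ha
          · simpa using hb
          · simp only [decide_eq_true_eq]
            intro hat
            exact hb (le_trans (List.rel_of_pairwise_cons hsorted (a' := a) ha) hat)
      simp [List.takeWhile_append_dropWhile, h1, h2]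
    rw [hfilter] at h
    have hpre := List.takeWhile_prefix (l := l) (fun x => decide (x ≤ t))
    have hlt2 : k - 1 < (l.takeWhile (fun x => decide (x ≤ t))).length := by omega
    have : l[k-1] = (l.takeWhile (fun x => decide (x ≤ t)))[k-1]'hlt2 := by
      rw [List.IsPrefix.getElem hpre]
    rw [this]
    have := List.mem_takeWhile_imp (List.getElem_mem hlt2)
    simpa using this

theorem kth_le_iff (s : Multiset ℝ) {k : ℕ} (hk1 : 1 ≤ k) (hk2 : k ≤ Multiset.card s) (t : ℝ) :
    kthSmallest s k 0 ≤ t ↔ k ≤ Multiset.countP (fun x => x ≤ t) s := by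
  have h1 : Multiset.countP (fun x => x ≤ t) s
      = (s.sort (· ≤ ·)).countP (fun x => decide (x ≤ t)) := by
    conv_lhs => rw [← Multiset.sort_eq s (· ≤ ·)]
    rfl
  rw [h1, kthSmallest]
  exact sorted_getD_le_iff (Multiset.pairwise_sort _ _) hk1 (by rwa [Multiset.length_sort]) t

theorem countP_kth (s : Multiset ℝ) (hs : s.Nodup) {k : ℕ} (hk1 : 1 ≤ k)
    (hk2 : k ≤ Multiset.card s) :
    Multiset.countP (fun x => x ≤ kthSmallest s k 0) s = k := by
  have hge : k ≤ Multiset.countP (fun x => x ≤ kthSmallest s k 0) s :=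
    (kth_le_iff s hk1 hk2 _).1 le_rfl
  by_contra hne
  have hgt : k + 1 ≤ Multiset.countP (fun x => x ≤ kthSmallest s k 0) s := by omega
  rcases eq_or_lt_of_le hk2 with heq | hlt
  · have := Multiset.countP_le_card (fun x => x ≤ kthSmallest s k 0) s
    omega
  · -- k + 1 ≤ card s
    have h2 : kthSmallest s (k+1) 0 ≤ kthSmallest s k 0 :=
      (kth_le_iff s (by omega) hlt _).2 hgt
    set l := s.sort (· ≤ ·) with hl
    have hlen : l.length = Multiset.card s := Multiset.length_sort _
    have hnd : l.Nodup := by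
      have : (↑l : Multiset ℝ) = s := Multiset.sort_eq _ _
      rwa [← Multiset.coe_nodup, this]
    have hslt : l.Pairwise (· < ·) := by
      have := (Multiset.pairwise_sort s (· ≤ ·)).and hnd
      exact this.imp fun h => lt_of_le_of_ne h.1 h.2
    have hk1' : k - 1 < l.length := by omega
    have hk' : k + 1 - 1 < l.length := by omega
    have : l[k-1] < l[k+1-1] := hslt.rel_get_of_lt (by simp; omega : (⟨k-1,hk1'⟩ : Fin l.length) < ⟨k+1-1, hk'⟩)
    rw [kthSmallest, kthSmallest, ← hl, List.getD_eq_getElem l 0 hk1', List.getD_eq_getElem l 0 hk'] at h2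
    exact absurd h2 (not_le.2 this)

theorem measurable_kth (N k : ℕ) (hk1 : 1 ≤ k) (hk2 : k ≤ N + 1) :
    Measurable (fun v : Fin (N+1) → ℝ => kthSmallest (Finset.univ.val.map v) k 0) := by
  apply measurable_of_Iic
  intro t
  have hset : (fun v : Fin (N+1) → ℝ => kthSmallest (Finset.univ.val.map v) k 0) ⁻¹' Set.Iic t
      = (fun v : Fin (N+1) → ℝ => ∑ i : Fin (N+1), if v i ≤ t then (1:ℕ) else 0) ⁻¹' Set.Ici k := by
    ext v
    simp only [Set.mem_preimage, Set.mem_Iic, Set.mem_Ici]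
    rw [kth_le_iff _ hk1 (by simp [hk2]) t, Multiset.countP_map]
    have : Multiset.card (Multiset.filter (fun a => v a ≤ t) Finset.univ.val)
        = (Finset.univ.filter (fun i => v i ≤ t)).card := rfl
    rw [this, Finset.card_filter]
  rw [hset]
  have hg : Measurable (fun v : Fin (N+1) → ℝ => ∑ i : Fin (N+1), if v i ≤ t then (1:ℕ) else 0) := by
    apply Finset.measurable_sum
    intro i _
    have : MeasurableSet {v : Fin (N+1) → ℝ | v i ≤ t} :=
      (measurable_pi_apply i) measurableSet_Iic
    exact Measurable.ite this measurable_const measurable_const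
  exact hg measurableSet_Ici


/-- Quantile lemma: for exchangeable `V 1, …, V (N+1)` with no ties a.s. and
`q` the `⌈(1-α)(N+1)⌉`-th order statistic of all `N+1` scores,
`P(V (N+1) ≤ q) ≥ 1 - α`. -/

theorem conformal_quantile_lemma {Ω : Type*} [MeasurableSpace Ω] (P : Measure Ω)
    [IsProbabilityMeasure P] (N : ℕ) (V : Fin (N + 1) → Ω → ℝ)
    (hmeas : ∀ i, Measurable (V i))
    (hexch : Exchangeable P V)
    (hties : ∀ i j, i ≠ j → P {ω | V i ω = V j ω} = 0)
    (α : ℝ) (hα : α ∈ Set.Ioo (0 : ℝ) 1) :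
    P {ω | V (Fin.last N) ω ≤
        kthSmallest (Finset.univ.val.map (fun i : Fin (N + 1) => V i ω))
          (⌈(1 - α) * (N + 1)⌉.toNat) 0}
      ≥ ENNReal.ofReal (1 - α) := by
  obtain ⟨hα0, hα1⟩ := hα
  set k := (⌈(1 - α) * (N + 1)⌉).toNat with hkdef
  have hpos : (0:ℝ) < (1 - α) * ((N:ℝ) + 1) := by
    apply mul_pos (by linarith) (by positivity)
  have hceil : (0:ℤ) < ⌈(1 - α) * ((N:ℝ) + 1)⌉ := Int.ceil_pos.2 hpos
  have hk1 : 1 ≤ k := by omega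
  have hkle : k ≤ N + 1 := by
    have : (⌈(1 - α) * ((N:ℝ) + 1)⌉ : ℤ) ≤ (N + 1 : ℤ) := by
      rw [Int.ceil_le]
      push_cast
      nlinarith
    omega
  have hkZ : (⌈(1 - α) * ((N:ℝ) + 1)⌉ : ℤ) = (k : ℤ) := by omega
  have hkge : (1 - α) * ((N:ℝ) + 1) ≤ (k : ℝ) := by
    have h := Int.le_ceil ((1 - α) * ((N:ℝ) + 1))
    rw [hkZ] at h
    push_cast at h
    linarith
  set Q : (Fin (N+1) → ℝ) → ℝ := fun v => kthSmallest (Finset.univ.val.map v) k 0 with hQdef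
  have hQm : Measurable Q := measurable_kth N k hk1 hkle
  set W : Ω → (Fin (N+1) → ℝ) := fun ω i => V i ω with hWdef
  have hWm : Measurable W := measurable_pi_lambda _ (fun i => hmeas i)
  set S : Fin (N+1) → Set (Fin (N+1) → ℝ) := fun i => {v | v i ≤ Q v} with hSdef
  have hSm : ∀ i, MeasurableSet (S i) :=
    fun i => measurableSet_le (measurable_pi_apply i) hQm
  set μ := Measure.map W P with hμdef
  have hQperm : ∀ (π : Equiv.Perm (Fin (N+1))) (v : Fin (N+1) → ℝ), Q (v ∘ π) = Q v := by
    intro π v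
    simp only [hQdef]
    congr 1
    have h1 : Finset.univ.val.map (v ∘ π) = (Finset.univ.val.map (π : Fin (N+1) → Fin (N+1))).map v := by
      rw [Multiset.map_map]
    rw [h1]
    congr 1
    have h2 : Finset.univ.map π.toEmbedding = Finset.univ := Finset.map_univ_equiv π
    have h3 := congrArg Finset.val h2
    rwa [Finset.map_val] at h3
  have hμS : ∀ i, μ (S i) = μ (S (Fin.last N)) := by
    intro i
    set π := Equiv.swap i (Fin.last N) with hπ
    set T : (Fin (N+1) → ℝ) → (Fin (N+1) → ℝ) := fun v => v ∘ π with hTdef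
    have hTm : Measurable T := measurable_pi_lambda _ (fun j => measurable_pi_apply (π j))
    have hpre : T ⁻¹' (S (Fin.last N)) = S i := by
      ext v
      simp only [hSdef, hTdef, Set.mem_preimage, Set.mem_setOf_eq, Function.comp_apply]
      rw [hQperm π v, Equiv.swap_apply_right]
    have hmapT : μ.map T = μ := by
      rw [hμdef, Measure.map_map hTm hWm]
      have hc : T ∘ W = fun ω => fun j => V (π j) ω := rfl
      rw [hc, hexch π]
    calc μ (S i) = μ (T ⁻¹' S (Fin.last N)) := by rw [hpre]
    _ = (μ.map T) (S (Fin.last N)) := (Measure.map_apply hTm (hSm _)).symm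
    _ = μ (S (Fin.last N)) := by rw [hmapT]
  -- the events in Ω
  set B : Fin (N+1) → Set Ω := fun i => W ⁻¹' (S i) with hBdef
  have hBm : ∀ i, MeasurableSet (B i) := fun i => hWm (hSm i)
  have hPB : ∀ i, P (B i) = μ (S i) := fun i => (Measure.map_apply hWm (hSm i)).symm
  -- the good set
  have hGc : P {ω | ¬ Function.Injective (W ω)} = 0 := by
    have hsub : {ω | ¬ Function.Injective (W ω)} ⊆
        ⋃ (i : Fin (N+1)) (j : Fin (N+1)) (_ : i ≠ j), {ω | V i ω = V j ω} := by
      intro ω hω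
      simp only [Set.mem_setOf_eq, Function.Injective] at hω
      push_neg at hω
      obtain ⟨i, j, hij, hne⟩ := hω
      exact Set.mem_iUnion.2 ⟨i, Set.mem_iUnion.2 ⟨j, Set.mem_iUnion.2 ⟨hne, hij⟩⟩⟩
    refine measure_mono_null hsub ?_
    refine measure_iUnion_null fun i => measure_iUnion_null fun j => measure_iUnion_null fun h => ?_
    exact hties i j h
  -- pointwise count
  have hcount : ∀ ω, Function.Injective (W ω) →
      ∑ i : Fin (N+1), (B i).indicator (fun _ => (1:ENNReal)) ω = (k : ENNReal) := by
    intro ω hinj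
    have h1 : ∀ i, (B i).indicator (fun _ => (1:ENNReal)) ω
        = if V i ω ≤ Q (W ω) then 1 else 0 := by
      intro i
      by_cases h : V i ω ≤ Q (W ω)
      · rw [if_pos h]
        have hmem : ω ∈ B i := h
        rw [Set.indicator_of_mem hmem]
      · rw [if_neg h]
        have hmem : ω ∉ B i := h
        rw [Set.indicator_of_notMem hmem]
    simp only [h1]
    rw [Finset.sum_boole]
    norm_cast
    have h2 : (Finset.univ.filter (fun i => V i ω ≤ Q (W ω))).card
        = Multiset.countP (fun x => x ≤ Q (W ω)) (Finset.univ.val.map (W ω)) := by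
      rw [Multiset.countP_map]
      rfl
    rw [h2, hQdef]
    have hnodup : (Finset.univ.val.map (W ω)).Nodup :=
      Multiset.Nodup.map hinj Finset.univ.nodup
    have hcard : Multiset.card (Finset.univ.val.map (W ω)) = N + 1 := by simp
    exact countP_kth _ hnodup hk1 (by rw [hcard]; exact hkle)
  -- sum of measures
  have hsum : ∑ i : Fin (N+1), P (B i) = (k : ENNReal) := by
    have h1 : ∀ i, P (B i) = ∫⁻ ω, (B i).indicator (fun _ => (1:ENNReal)) ω ∂P := by
      intro i
      exact (lintegral_indicator_one (hBm i)).symm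
    simp only [h1]
    rw [← lintegral_finset_sum _ (fun i _ => (measurable_const.indicator (hBm i)))]
    have h2 : (fun ω => ∑ i : Fin (N+1), (B i).indicator (fun _ => (1:ENNReal)) ω)
        =ᵐ[P] (fun _ => (k : ENNReal)) := by
      rw [Filter.EventuallyEq, ae_iff]
      refine measure_mono_null ?_ hGc
      intro ω hω
      simp only [Set.mem_setOf_eq] at hω ⊢
      intro hinj
      exact hω (hcount ω hinj)
    rw [lintegral_congr_ae h2, lintegral_const, measure_univ, mul_one]
  have hsum2 : ∑ i : Fin (N+1), P (B i) = (N+1 : ENNReal) * μ (S (Fin.last N)) := by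
    have : ∀ i, P (B i) = μ (S (Fin.last N)) := fun i => (hPB i).trans (hμS i)
    simp only [this, Finset.sum_const, Finset.card_univ, Fintype.card_fin, nsmul_eq_mul]
    push_cast
    ring
  have hkey : (N+1 : ENNReal) * μ (S (Fin.last N)) = (k : ENNReal) := by
    rw [← hsum2, hsum]
  -- identify goal set
  have hgoal : {ω | V (Fin.last N) ω ≤
      kthSmallest (Finset.univ.val.map (fun i : Fin (N + 1) => V i ω)) k 0} = B (Fin.last N) := rfl
  rw [hgoal, hPB, ge_iff_le]
  rw [← ENNReal.mul_le_mul_iff_right (a := (N+1 : ENNReal)) (by simp) (by simp), hkey]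
  have hNcast : (N+1 : ENNReal) = ENNReal.ofReal ((N:ℝ)+1) := by
    rw [show ((N:ℝ)+1) = ((N+1:ℕ):ℝ) by push_cast; ring, ENNReal.ofReal_natCast]
    push_cast; ring
  calc (N+1 : ENNReal) * ENNReal.ofReal (1 - α)
      = ENNReal.ofReal (((N:ℝ)+1) * (1 - α)) := by
        rw [hNcast, ← ENNReal.ofReal_mul (by positivity)]
  _ ≤ ENNReal.ofReal (k:ℝ) := ENNReal.ofReal_le_ofReal (by nlinarith [hkge])
  _ = (k : ENNReal) := ENNReal.ofReal_natCast k
end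

section
/- For exchangeable V_1,...,V_{N+1} with no ties a.s. and k = ⌈(1-α)(N+1)⌉ ≤ N+1, the coverage probability P(V_{N+1} ≤ k-th order statistic of {V_1,...,V_{N+1}}) equals exactly k/(N+1), which lies in [1-α, 1-α + 1/(N+1)]. -/
open MeasureTheory

/-- Position-count characterization of the order statistic of a sorted list. -/
lemma sorted_getD_iff (l : List ℝ) (hl : l.Pairwise (· ≤ ·)) (k : ℕ) (hk1 : 1 ≤ k)
    (hkn : k ≤ l.length) (x : ℝ) :
    x ≤ l.getD (k - 1) 0 ↔ l.countP (fun e => decide (e < x)) ≤ k - 1 := by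
  have hlt : k - 1 < l.length := by omega
  rw [List.getD_eq_getElem l 0 hlt]
  constructor
  · intro hx
    have hsplit : l.countP (fun e => decide (e < x)) =
        (l.take (k-1)).countP (fun e => decide (e < x)) +
        (l.drop (k-1)).countP (fun e => decide (e < x)) := by
      conv_lhs => rw [← List.take_append_drop (k-1) l, List.countP_append]
    have hdrop : (l.drop (k-1)).countP (fun e => decide (e < x)) = 0 := by
      rw [List.countP_eq_zero]
      intro e he
      obtain ⟨j, hj, hej⟩ := List.mem_iff_getElem.1 he
      have hjlen : k - 1 + j < l.length := by
        simp [List.length_drop] at hj; omega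
      rw [List.getElem_drop] at hej
      have : l[k-1] ≤ l[k-1+j] := by
        have := hl.rel_get_of_le (a := ⟨k-1, hlt⟩) (b := ⟨k-1+j, by
          have := hj; simp [List.length_drop] at this; omega⟩) (by simp)
        simpa using this
      simp only [decide_eq_true_eq] at *
      subst hej
      simp only [decide_eq_false_iff_not, not_lt]
      linarith
    have htake : (l.take (k-1)).countP (fun e => decide (e < x)) ≤ k - 1 := by
      calc _ ≤ (l.take (k-1)).length := List.countP_le_length
        _ ≤ k - 1 := by simp [List.length_take]
    omega
  · intro hc
    by_contra hx
    push_neg at hx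
    have hcount : (l.take k).countP (fun e => decide (e < x)) = k := by
      have hlen : (l.take k).length = k := by simp [List.length_take]; omega
      rw [List.countP_eq_length.2, hlen]
      intro e he
      obtain ⟨j, hj, hej⟩ := List.mem_iff_getElem.1 he
      rw [List.getElem_take] at hej
      have hjl : j < l.length := by rw [hlen] at hj; omega
      have : l[j] ≤ l[k-1] := by
        have := hl.rel_get_of_le (a := ⟨j, hjl⟩) (b := ⟨k-1, hlt⟩) (by
          simp [Fin.le_def]; rw [hlen] at hj; omega)
        simpa using this
      subst hej
      simp only [decide_eq_true_eq]
      linarith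
    have : k ≤ l.countP (fun e => decide (e < x)) := by
      conv_rhs => rw [← List.take_append_drop k l, List.countP_append]
      omega
    omega

/-- Comparison with the `k`-th order statistic via rank counting. -/
lemma kth_iff {n : ℕ} (f : Fin n → ℝ) (k : ℕ) (h1 : 1 ≤ k) (h2 : k ≤ n) (i : Fin n) :
    f i ≤ kthSmallest (Finset.univ.val.map f) k 0 ↔
      (Finset.univ.filter (fun j => f j < f i)).card ≤ k - 1 := by
  set s : Multiset ℝ := Finset.univ.val.map f with hs
  have hcard : Multiset.card s = n := by simp [hs]
  have hlen : (s.sort (· ≤ ·)).length = n := by simp [Multiset.length_sort, hcard]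
  rw [kthSmallest, sorted_getD_iff _ (Multiset.pairwise_sort _ _) k h1 (by omega)]
  have heq : (s.sort (· ≤ ·)).countP (fun e => decide (e < f i)) =
      (Finset.univ.filter (fun j => f j < f i)).card := by
    have h1 : Multiset.countP (fun e => e < f i) s =
        (s.sort (· ≤ ·)).countP (fun e => decide (e < f i)) := by
      conv_lhs => rw [← Multiset.sort_eq s (· ≤ ·)]
      exact Multiset.coe_countP _ _
    rw [← h1, hs, Multiset.countP_map]
    rfl
  rw [heq]

/-- Rank counts are invariant under permutation of the underlying family. -/
lemma perm_count {n : ℕ} (g : Fin n → ℝ) (π : Equiv.Perm (Fin n)) (i : Fin n) :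
    (Finset.univ.filter (fun j => g (π j) < g (π i))).card =
      (Finset.univ.filter (fun j => g j < g (π i))).card := by
  apply Finset.card_bij (fun j _ => π j)
  · intro a ha; simp only [Finset.mem_filter, Finset.mem_univ, true_and] at *; exact ha
  · intro a _ b _ h; exact π.injective h
  · intro b hb
    refine ⟨π.symm b, ?_, by simp⟩
    simp only [Finset.mem_filter, Finset.mem_univ, true_and] at *
    simpa using hb

/-- For an injective family, exactly `k` indices have rank `< k`. -/
lemma rank_card {n : ℕ} (f : Fin n → ℝ) (hf : Function.Injective f) (k : ℕ)
    (hk : k ≤ n) :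
    (Finset.univ.filter (fun i => (Finset.univ.filter (fun j => f j < f i)).card < k)).card
      = k := by
  set c : Fin n → ℕ := fun i => (Finset.univ.filter (fun j => f j < f i)).card with hc
  have hmono : ∀ i j, f i < f j → c i < c j := by
    intro i j hij
    apply Finset.card_lt_card
    constructor
    · intro m hm
      simp only [Finset.mem_filter, Finset.mem_univ, true_and] at *
      linarith
    · intro hsub
      have hi : i ∈ Finset.univ.filter (fun m => f m < f j) := by simp [hij]
      have := hsub hi
      simp at this
  have hinj : Function.Injective c := by
    intro i j hij
    by_contra hne
    rcases lt_trichotomy (f i) (f j) with h | h | h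
    · exact absurd hij (Nat.ne_of_lt (hmono _ _ h))
    · exact hne (hf h)
    · exact absurd hij.symm (Nat.ne_of_lt (hmono _ _ h))
  have hbound : ∀ i, c i < n := by
    intro i
    have hsub : Finset.univ.filter (fun j => f j < f i) ⊆ Finset.univ.erase i := by
      intro m hm
      simp only [Finset.mem_filter, Finset.mem_univ, true_and] at hm
      simp only [Finset.mem_erase, Finset.mem_univ, and_true]
      intro h; subst h; exact lt_irrefl _ hm
    calc c i ≤ (Finset.univ.erase i).card := Finset.card_le_card hsub
      _ = n - 1 := by simp
      _ < n := by have : 0 < n := i.pos; omega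
  set e : Fin n → Fin n := fun i => ⟨c i, hbound i⟩ with he
  have heinj : Function.Injective e := by
    intro i j h
    exact hinj (by simpa [he, Fin.ext_iff] using h)
  have hesurj : Function.Surjective e := Finite.surjective_of_injective heinj
  have h1 : (Finset.univ.filter (fun i => c i < k)).card
      = (Finset.univ.filter (fun v : Fin n => v.val < k)).card := by
    apply Finset.card_bij (fun i _ => e i)
    · intro a ha; simpa using (by simpa using ha : c a < k)
    · intro a _ b _ h; exact heinj h
    · intro b hb
      obtain ⟨a, ha⟩ := hesurj b
      refine ⟨a, ?_, ha⟩
      simp only [Finset.mem_filter, Finset.mem_univ, true_and] at *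
      rw [← ha] at hb
      simpa [he] using hb
  have h2 : (Finset.univ.filter (fun v : Fin n => v.val < k)).card = k := by
    have heq : Finset.univ.filter (fun v : Fin n => v.val < k) =
        (Finset.range k).attachFin (fun m hm => lt_of_lt_of_le (Finset.mem_range.1 hm) hk) := by
      ext v
      simp [Finset.mem_attachFin]
    rw [heq, Finset.card_attachFin, Finset.card_range]
  rw [h1, h2]

/-- Exact conformal coverage: with `k = ⌈(1-α)(N+1)⌉ ≤ N+1`, the coverage
probability equals exactly `k/(N+1)`, which lies in `[1-α, 1-α+1/(N+1)]`. -/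
theorem conformal_exact_coverage {Ω : Type*} [MeasurableSpace Ω] (P : Measure Ω)
    [IsProbabilityMeasure P] (N : ℕ) (V : Fin (N + 1) → Ω → ℝ)
    (hmeas : ∀ i, Measurable (V i))
    (hexch : Exchangeable P V)
    (hties : ∀ i j, i ≠ j → P {ω | V i ω = V j ω} = 0)
    (α : ℝ) (hα : α ∈ Set.Ioo (0 : ℝ) 1)
    (k : ℕ) (hk : k = ⌈(1 - α) * (N + 1)⌉.toNat) (hkN : k ≤ N + 1) :
    P {ω | V (Fin.last N) ω ≤
        kthSmallest (Finset.univ.val.map (fun i : Fin (N + 1) => V i ω)) k 0}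
        = (k : ENNReal) / (N + 1)
    ∧ (k : ℝ) / (N + 1) ∈ Set.Icc (1 - α) (1 - α + 1 / (N + 1)) := by
  classical
  obtain ⟨hα0, hα1⟩ := hα
  have hNpos : (0:ℝ) < (N:ℝ) + 1 := by positivity
  have hxpos : (0:ℝ) < (1 - α) * ((N:ℝ) + 1) := by nlinarith
  have hceilpos : 0 < ⌈(1 - α) * ((N:ℝ) + 1)⌉ := Int.ceil_pos.2 hxpos
  have hkz : (k : ℤ) = ⌈(1 - α) * ((N:ℝ) + 1)⌉ := by
    rw [hk]; exact Int.toNat_of_nonneg hceilpos.le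
  have hkr : (k : ℝ) = (⌈(1 - α) * ((N:ℝ) + 1)⌉ : ℝ) := by exact_mod_cast hkz
  have hkl : (1 - α) * ((N:ℝ) + 1) ≤ k := hkr ▸ Int.le_ceil _
  have hku : (k : ℝ) < (1 - α) * ((N:ℝ) + 1) + 1 := by
    rw [hkr]; exact Int.ceil_lt_add_one _
  have hk1 : 1 ≤ k := by
    rcases Nat.eq_zero_or_pos k with h | h
    · subst h; simp at hkl; nlinarith
    · exact h
  constructor
  · -- probability part
    set c : Fin (N+1) → (Fin (N+1) → ℝ) → ℕ :=
      fun i g => (Finset.univ.filter (fun j => g j < g i)).card with hcdef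
    set B : Fin (N+1) → Set (Fin (N+1) → ℝ) := fun i => {g | c i g < k} with hBdef
    have hBmeas : ∀ i, MeasurableSet (B i) := by
      intro i
      have hmc : Measurable (fun g : Fin (N+1) → ℝ => c i g) := by
        have h : (fun g : Fin (N+1) → ℝ => c i g)
            = fun g => ∑ j, if g j < g i then 1 else 0 := by
          funext g; exact Finset.card_filter _ _
        rw [h]
        apply Finset.measurable_sum
        intro j _
        exact Measurable.ite
          (measurableSet_lt (measurable_pi_apply j) (measurable_pi_apply i))
          measurable_const measurable_const
      exact hmc (by trivial : MeasurableSet {m : ℕ | m < k})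
    have hVmeasv : Measurable (fun ω => fun j => V j ω) :=
      measurable_pi_lambda _ hmeas
    set A : Fin (N+1) → Set Ω := fun i => (fun ω => fun j => V j ω) ⁻¹' B i with hAdef
    have hAmeas : ∀ i, MeasurableSet (A i) := fun i => hVmeasv (hBmeas i)
    have hgoal : {ω | V (Fin.last N) ω ≤
        kthSmallest (Finset.univ.val.map (fun i : Fin (N + 1) => V i ω)) k 0}
        = A (Fin.last N) := by
      ext ω
      have h := kth_iff (fun j => V j ω) k hk1 hkN (Fin.last N)
      simp only [hAdef, hBdef, hcdef, Set.mem_setOf_eq, Set.mem_preimage]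
      constructor
      · intro hle
        have := h.1 hle
        omega
      · intro hlt
        exact h.2 (by omega)
    have hsame : ∀ i, P (A i) = P (A (Fin.last N)) := by
      intro i
      set π := Equiv.swap i (Fin.last N) with hπ
      have hmeasπ : Measurable (fun ω => fun j => V (π j) ω) :=
        measurable_pi_lambda _ (fun j => hmeas (π j))
      have h := hexch π
      have h1 : P (A (Fin.last N))
          = Measure.map (fun ω => fun j => V j ω) P (B (Fin.last N)) := by
        rw [Measure.map_apply hVmeasv (hBmeas _)]
      rw [h1, ← h, Measure.map_apply hmeasπ (hBmeas _)]
      congr 1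
      ext ω
      simp only [Set.mem_preimage, hBdef, hAdef, hcdef, Set.mem_setOf_eq]
      have hperm := perm_count (fun j => V j ω) π (Fin.last N)
      have hπlast : π (Fin.last N) = i := Equiv.swap_apply_right _ _
      simp only [hπlast] at hperm ⊢
      rw [hperm]
    have hsum : ∑ i : Fin (N+1), P (A i) = (k : ENNReal) := by
      have hindic : ∀ i : Fin (N+1),
          P (A i) = ∫⁻ ω, (A i).indicator (fun _ => (1:ENNReal)) ω ∂P := by
        intro i
        exact (lintegral_indicator_one (hAmeas i)).symm
      rw [Finset.sum_congr rfl (fun i _ => hindic i),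
        ← lintegral_finset_sum _ (fun i _ =>
          (measurable_const.indicator (hAmeas i)))]
      have hpt : ∀ ω, ∑ i : Fin (N+1), (A i).indicator (fun _ => (1:ENNReal)) ω
          = ((Finset.univ.filter (fun i => ω ∈ A i)).card : ENNReal) := by
        intro ω
        simp only [Set.indicator_apply, Finset.sum_boole]
      calc ∫⁻ ω, ∑ i : Fin (N+1), (A i).indicator (fun _ => (1:ENNReal)) ω ∂P
          = ∫⁻ ω, ((Finset.univ.filter (fun i => ω ∈ A i)).card : ENNReal) ∂P := by
            exact lintegral_congr hpt
        _ = ∫⁻ _, (k : ENNReal) ∂P := by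
            apply lintegral_congr_ae
            have hbad : P (⋃ (i : Fin (N+1)), ⋃ (j : Fin (N+1)), ⋃ (_ : i ≠ j),
                {ω | V i ω = V j ω}) = 0 :=
              measure_iUnion_null fun i => measure_iUnion_null fun j =>
                measure_iUnion_null fun hij => hties i j hij
            filter_upwards [measure_eq_zero_iff_ae_notMem.1 hbad] with ω hω
            have hfinj : Function.Injective (fun j => V j ω) := by
              intro a b hab
              by_contra hne
              exact hω (Set.mem_iUnion.2 ⟨a, Set.mem_iUnion.2 ⟨b,
                Set.mem_iUnion.2 ⟨hne, hab⟩⟩⟩)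
            have hr := rank_card (fun j => V j ω) hfinj k hkN
            have hAi : ∀ i, (ω ∈ A i) ↔ c i (fun j => V j ω) < k := by
              intro i; rfl
            rw [show (Finset.univ.filter (fun i => ω ∈ A i))
                = (Finset.univ.filter (fun i =>
                  (Finset.univ.filter (fun j => V j ω < V i ω)).card < k)) from by
              apply Finset.filter_congr
              intro i _
              simpa using hAi i]
            exact_mod_cast congrArg (Nat.cast (R := ENNReal)) hr
        _ = (k : ENNReal) := by
            rw [lintegral_const, measure_univ, mul_one]
    have htotal : ((N:ENNReal) + 1) * P (A (Fin.last N)) = (k : ENNReal) := by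
      rw [Finset.sum_congr rfl (fun i _ => hsame i)] at hsum
      rw [Finset.sum_const, Finset.card_univ, Fintype.card_fin, nsmul_eq_mul] at hsum
      rw [← hsum]
      push_cast
      ring
    rw [hgoal]
    rw [ENNReal.eq_div_iff (by simp : ((N:ENNReal) + 1) ≠ 0)
      (by simp : ((N:ENNReal) + 1) ≠ ⊤)]
    exact htotal
  · constructor
    · rw [le_div_iff₀ hNpos]; linarith
    · rw [div_le_iff₀ hNpos]
      have h1 : (1 / ((N:ℝ) + 1)) * ((N:ℝ) + 1) = 1 := by field_simp
      nlinarith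
end
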